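/- arXiv:1306.3936 — 2 statements merged into one kernel-verified Lean document; each statement's English description precedes it below -/
import Mathlib

section
/- Let X be a complete, doubling, uniformly perfect metric space and let E ⊆ X be an (α_n)-regular set. If (α_n) ∈ ℓ^0 (i.e. Σ_n α_n^p < ∞ for every p > 0), then E is fat, i.e. μ(E) > 0 for every doubling measure μ on X. -/
open MeasureTheory Metric Set Filter

/-- A measure is doubling with constant `C`:
`0 < μ(B(x,2r)) ≤ C·μ(B(x,r)) < ∞` for all `x` and `r > 0`. -/
def IsDoublingWith {X : Type*} [MetricSpace X] [MeasurableSpace X]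
    (μ : Measure X) (C : NNReal) : Prop :=
  ∀ (x : X) (r : ℝ), 0 < r →
    0 < μ (ball x (2 * r)) ∧ μ (ball x (2 * r)) ≤ (C : ENNReal) * μ (ball x r) ∧
      (C : ENNReal) * μ (ball x r) < ⊤

/-- A doubling measure: doubling with some constant `C ≥ 1`. -/
def IsDoublingMeasure {X : Type*} [MetricSpace X] [MeasurableSpace X]
    (μ : Measure X) : Prop :=
  ∃ C : NNReal, 1 ≤ C ∧ IsDoublingWith μ C

/-- A uniformly perfect metric space. -/
def UniformlyPerfect (X : Type*) [MetricSpace X] : Prop :=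
  (∃ x y : X, x ≠ y) ∧
    ∃ D : ℝ, 1 ≤ D ∧ ∀ (x : X) (r : ℝ), 0 < r →
      ((Set.univ : Set X) \ ball x r).Nonempty → (ball x r \ ball x (r / D)).Nonempty

/-- A (metrically) doubling space: there is `N` such that every ball of radius `r`
is covered by `N` balls of radius `r/2`. -/
def DoublingSpace (X : Type*) [MetricSpace X] : Prop :=
  ∃ N : ℕ, ∀ (x : X) (r : ℝ), 0 < r →
    ∃ s : Finset X, s.card ≤ N ∧ ball x r ⊆ ⋃ y ∈ s, ball y (r / 2)

/-- Ahlfors `q`-regularity of the measure `H` with constant `C`. -/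
def AhlforsRegular {X : Type*} [MetricSpace X] [MeasurableSpace X]
    (H : Measure X) (q C : ℝ) : Prop :=
  ∀ (x : X) (r : ℝ), 0 < r →
    ENNReal.ofReal (r ^ q / C) ≤ H (ball x r) ∧ H (ball x r) ≤ ENNReal.ofReal (C * r ^ q)

/-- An `(α n)`-regular structure on `X`: Borel "cubes" `Q n i` (for `i ∈ idx n`) with
centers `ctr n i`, radii `rad n i` and constants `d, C₁, C₂, C₃(·)` satisfying
conditions (I)-(V) of Ojala's definition of `(α n)`-regular sets. -/
structure RegularStructure (X : Type*) [MetricSpace X] [MeasurableSpace X]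
    (α : ℕ → ℝ) where
  idx : ℕ → Set ℕ
  Q : ℕ → ℕ → Set X
  ctr : ℕ → ℕ → X
  rad : ℕ → ℕ → ℝ
  d : ℝ
  C₁ : ℝ
  C₂ : ℝ
  C₃ : ℝ → ℝ
  d_pos : 0 < d
  d_le_one : d ≤ 1
  one_le_C₁ : 1 ≤ C₁
  one_le_C₂ : 1 ≤ C₂
  borel : ∀ n, ∀ i ∈ idx n, MeasurableSet (Q n i)
  rad_pos : ∀ n, ∀ i ∈ idx n, 0 < rad n i
  -- (I): each level partitions the space
  cover : ∀ (n : ℕ) (x : X), ∃ i ∈ idx n, x ∈ Q n i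
  pairwise_disj : ∀ n, ∀ i ∈ idx n, ∀ j ∈ idx n, i ≠ j → Q n i ∩ Q n j = ∅
  -- (II): nestedness
  nested : ∀ k m, m ≤ k → ∀ i ∈ idx k, ∀ j ∈ idx m, Q k i ∩ Q m j = ∅ ∨ Q k i ⊆ Q m j
  -- (III): cubes squeezed between balls
  ball_subset : ∀ n, ∀ i ∈ idx n, ball (ctr n i) (rad n i) ⊆ Q n i
  subset_ball : ∀ n, ∀ i ∈ idx n, Q n i ⊆ ball (ctr n i) (C₁ * rad n i)
  -- (IV): size of the child cube containing the center
  center_lower : ∀ n, ∀ i ∈ idx n, ∀ j ∈ idx (n + 1), ctr n i ∈ Q (n + 1) j →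
    (1 / C₂) * α n ^ (1 / d) * rad n i ≤ rad (n + 1) j
  center_upper : ∀ n, ∀ i ∈ idx n, ∀ j ∈ idx (n + 1), ctr n i ∈ Q (n + 1) j →
    rad (n + 1) j ≤ C₂ * α n ^ d * rad n i
  center_proper : ∀ n, ∀ i ∈ idx n, ∀ j ∈ idx (n + 1), ctr n i ∈ Q (n + 1) j →
    (Q n i \ Q (n + 1) j).Nonempty
  -- (V): comparability of radii of nearby cubes of the same level
  one_le_C₃ : ∀ T : ℝ, 1 < T → 1 ≤ C₃ T
  comparable : ∀ T : ℝ, 1 < T → ∀ n, ∀ i ∈ idx n, ∀ j ∈ idx n,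
    (Q n i ∩ ball (ctr n j) (T * rad n j)).Nonempty →
    (1 / C₃ T) * rad n j ≤ rad n i ∧ rad n i ≤ C₃ T * rad n j

namespace RegularStructure

variable {X : Type*} [MetricSpace X] [MeasurableSpace X] {α : ℕ → ℝ}

open scoped Classical

/-- `E_n`: the union over `i ∈ N_n` of `Q_{n,i} ∖ Q_{n+1,j(i)}` where `j(i)` is the
index of the `(n+1)`-cube containing the center `x_{n,i}`. -/
def level (S : RegularStructure X α) (n : ℕ) : Set X :=
  {x | ∃ i ∈ S.idx n, ∃ j ∈ S.idx (n + 1),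
    S.ctr n i ∈ S.Q (n + 1) j ∧ x ∈ S.Q n i \ S.Q (n + 1) j}

/-- The `(α n)`-regular set `E = ⋂ n, E_n` determined by the structure. -/
def limitSet (S : RegularStructure X α) : Set X := ⋂ n, S.level n

/-- `⋂_{i=1}^{n-1} E_i`. -/
def preLevel (S : RegularStructure X α) (n : ℕ) : Set X :=
  ⋂ i ∈ Finset.Icc 1 (n - 1), S.level i

/-- `𝔍_{n,j}`: the union of the `(n+1)`-cubes contained in `B(x_{n,j}, r_{n,j}/2)`. -/
def Jset (S : RegularStructure X α) (n j : ℕ) : Set X :=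
  {x | ∃ i ∈ S.idx (n + 1),
    S.Q (n + 1) i ⊆ ball (S.ctr n j) (S.rad n j / 2) ∧ x ∈ S.Q (n + 1) i}

/-- `IN(B(x,r),n)`: the union of the `n`-cubes contained in `B(x,r)`. -/
def INset (S : RegularStructure X α) (x : X) (r : ℝ) (n : ℕ) : Set X :=
  {y | ∃ j ∈ S.idx n, S.Q n j ⊆ ball x r ∧ y ∈ S.Q n j}

/-- `COV(B(x,r),n)`: the union of the `n`-cubes meeting `B(x,r)`. -/
def COVset (S : RegularStructure X α) (x : X) (r : ℝ) (n : ℕ) : Set X :=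
  {y | ∃ j ∈ S.idx n, (S.Q n j ∩ ball x r).Nonempty ∧ y ∈ S.Q n j}

/-- The normalizing constant `A_{n,j} = H(𝔍_{n,j}) / ∫_{𝔍_{n,j}} d(x_{n,j},y)^ρ dH(y)`. -/
noncomputable def Acoef (S : RegularStructure X α) (H : Measure X) (ρ : ℝ) (n j : ℕ) : ℝ :=
  (H (S.Jset n j)).toReal / ∫ y in S.Jset n j, dist (S.ctr n j) y ^ ρ ∂H

/-- The weight `y_n`: equal to `A_{n,j} d(x_{n,j},x)^ρ` on `𝔍_{n,j}` and `1` elsewhere. -/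
noncomputable def weight (S : RegularStructure X α) (H : Measure X) (ρ : ℝ) (n : ℕ)
    (x : X) : ℝ :=
  if h : ∃ j ∈ S.idx n, x ∈ S.Jset n j then
    S.Acoef H ρ n h.choose * dist (S.ctr n h.choose) x ^ ρ
  else 1

/-- The measure `θ_n` with `dθ_n = y_n dH`. -/
noncomputable def theta (S : RegularStructure X α) (H : Measure X) (ρ : ℝ) (n : ℕ) :
    Measure X :=
  H.withDensity fun x => ENNReal.ofReal (S.weight H ρ n x)

/-- The averaged weight `t_n`: on each `(n+1)`-cube `Q`, equal to `θ_n(Q)/H(Q)`. -/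
noncomputable def avgWeight (S : RegularStructure X α) (H : Measure X) (ρ : ℝ) (n : ℕ)
    (x : X) : ℝ :=
  if h : ∃ i ∈ S.idx (n + 1), x ∈ S.Q (n + 1) i then
    (S.theta H ρ n (S.Q (n + 1) h.choose)).toReal / (H (S.Q (n + 1) h.choose)).toReal
  else 1

/-- `K_n = ∏_{i=n₀}^{n} t_i`. -/
noncomputable def Kweight (S : RegularStructure X α) (H : Measure X) (ρ : ℝ)
    (n₀ n : ℕ) (x : X) : ℝ :=
  ∏ i ∈ Finset.Icc n₀ n, S.avgWeight H ρ i x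

/-- The measure `ν_n` with `dν_n = K_n dH`. -/
noncomputable def nu (S : RegularStructure X α) (H : Measure X) (ρ : ℝ) (n₀ n : ℕ) :
    Measure X :=
  H.withDensity fun x => ENNReal.ofReal (S.Kweight H ρ n₀ n x)

/-- A level `n` is good if `B(x_{n,j}, r_{n,j}/16) ⊆ 𝔍_{n,j}` for all `j`, and balls
`B(x,2r)` with `x ∈ Q_{n,j}`, `r ≤ r_{n,j}/(32 C₃(2C₁))` miss all `𝔍_{n,i}`, `i ≠ j`. -/
def GoodLevel (S : RegularStructure X α) (n : ℕ) : Prop :=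
  (∀ j ∈ S.idx n, ball (S.ctr n j) (S.rad n j / 16) ⊆ S.Jset n j) ∧
  (∀ j ∈ S.idx n, ∀ x ∈ S.Q n j, ∀ r : ℝ, 0 < r →
    r ≤ S.rad n j / (32 * S.C₃ (2 * S.C₁)) →
    ∀ i ∈ S.idx n, i ≠ j → ball x (2 * r) ∩ S.Jset n i = ∅)

/-- Relative plumpness of the `(α n)`-regular set determined by the structure. -/
def RelativelyPlump (S : RegularStructure X α) : Prop :=
  ∃ b : ℝ, 0 < b ∧ ∀ x ∈ S.limitSet, ∀ R : ℝ, 0 < R → ∀ n : ℕ,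
    (∃ j ∈ S.idx n, S.Q n j ⊆ ball x R ∩ S.preLevel n) →
    (∀ m, m < n → ¬ ∃ j ∈ S.idx m, S.Q m j ⊆ ball x R ∩ S.preLevel m) →
    ∃ y ∈ S.preLevel n, ball y (b * R) ⊆ ball x R ∩ S.preLevel n

end RegularStructure

/-- `E ⊆ X` is an `(α n)`-regular set. -/
def IsRegularSet {X : Type*} [MetricSpace X] [MeasurableSpace X]
    (α : ℕ → ℝ) (E : Set X) : Prop :=
  ∃ S : RegularStructure X α, E = S.limitSet

/-!
In a uniformly perfect space every ball `B(x,R)` that is not all of `X` contains an annulus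
carrying a fixed fraction of `μ (B(x,2R))`; iterating gives the decay
`μ (B(x,r)) ≤ K (r/R)^ε μ (B(x,2R))` for some `ε > 0`. By (IV) the cube `Q_{n+1,j(i)}` removed
from `Q_{n,i}` lies in a ball about `x_{n,i}` of radius `≲ α_n^d r_{n,i}`, so it carries at most a
fraction `δ_n ≲ α_n^{dε}` of `μ (Q_{n,i})`, and `(α_n) ∈ ℓ⁰` makes `∑ δ_n` finite for whatever
`ε` the measure dictates. Choosing `n₀` with `∑_{n ≥ n₀} δ_n < 1`, the levels `n ≥ n₀` remove less
than all of the measure of an `n₀`-cube that lies in `E_0 ∩ ⋯ ∩ E_{n₀-1}`.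
-/

def UniformlyPerfectWith (X : Type*) [MetricSpace X] (D : ℝ) : Prop :=
  ∀ (x : X) (r : ℝ), 0 < r → ((Set.univ : Set X) \ ball x r).Nonempty →
    (ball x r \ ball x (r / D)).Nonempty

def HasBallDecay {X : Type*} [MetricSpace X] [MeasurableSpace X] (μ : Measure X) (K ε : ℝ) :
    Prop :=
  ∀ (x : X) (r R : ℝ), 0 < r → r ≤ R → ((Set.univ : Set X) \ ball x R).Nonempty →
    μ (ball x r) ≤ ENNReal.ofReal (K * (r / R) ^ ε) * μ (ball x (2 * R))

theorem exists_pow_le_inv_mul_rpow {θ b s : ℝ} (hθ0 : 0 < θ) (hθ1 : θ < 1) (hb : 1 < b)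
    (hs0 : 0 < s) (hs1 : s ≤ 1) :
    ∃ m : ℕ, b ^ m * s ≤ 1 ∧ θ ^ m ≤ θ⁻¹ * s ^ Real.logb b θ⁻¹ := by
  obtain ⟨m, hm, hm'⟩ := exists_nat_pow_near (one_le_inv₀ hs0 |>.2 hs1) hb
  refine ⟨m, ?_, ?_⟩
  · calc b ^ m * s ≤ s⁻¹ * s := by gcongr
      _ = 1 := inv_mul_cancel₀ hs0.ne'
  set ε := Real.logb b θ⁻¹
  have hbε : b ^ ε = θ⁻¹ := Real.rpow_logb (by linarith) hb.ne' (inv_pos.2 hθ0)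
  have hε : 0 ≤ ε := Real.logb_nonneg hb (one_le_inv₀ hθ0 |>.2 hθ1.le)
  have hone : 1 ≤ (b ^ (m + 1) * s) ^ ε :=
    Real.one_le_rpow ((inv_le_iff_one_le_mul₀ hs0).1 hm'.le) hε
  calc θ ^ m ≤ θ ^ m * (b ^ (m + 1) * s) ^ ε := le_mul_of_one_le_right (by positivity) hone
    _ = θ ^ m * θ⁻¹ ^ (m + 1) * s ^ ε := by
      rw [Real.mul_rpow (by positivity) hs0.le, ← Real.rpow_pow_comm (by linarith), hbε, mul_assoc]
    _ = θ⁻¹ * s ^ ε := by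
      rw [inv_pow, pow_succ, mul_inv, ← mul_assoc, mul_inv_cancel₀ (by positivity), one_mul]

theorem summable_mul_rpow_of_forall_summable_rpow {α : ℕ → ℝ} (hα : ∀ n, 0 ≤ α n)
    (hsum : ∀ p : ℝ, 0 < p → Summable fun n => α n ^ p) {c d ε : ℝ} (hc : 0 ≤ c) (hd : 0 < d)
    (hε : 0 < ε) : Summable fun n => (c * α n ^ d) ^ ε := by
  have h : (fun n => (c * α n ^ d) ^ ε) = fun n => c ^ ε * α n ^ (d * ε) := by
    funext n
    rw [Real.mul_rpow hc (Real.rpow_nonneg (hα n) d), Real.rpow_mul (hα n)]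
  rw [h]
  exact (hsum _ (mul_pos hd hε)).mul_left _

theorem MeasureTheory.measure_pos_of_measure_diff_le_mul {X : Type*} [MeasurableSpace X]
    {μ : Measure X} {s t : Set X} {c : ENNReal} (hc : c < 1) (hs0 : μ s ≠ 0) (hs : μ s ≠ ⊤)
    (h : μ (s \ t) ≤ c * μ s) : 0 < μ t := by
  refine pos_iff_ne_zero.2 fun ht => ?_
  rw [measure_sdiff_null ht] at h
  exact (by simpa using ENNReal.mul_lt_mul_left hs0 hs hc : c * μ s < μ s).not_ge h

namespace IsDoublingWith

variable {X : Type*} [MetricSpace X] [MeasurableSpace X] {μ : Measure X} {C : NNReal}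

theorem measure_ball_pos (hμ : IsDoublingWith μ C) (x : X) {r : ℝ} (hr : 0 < r) :
    0 < μ (ball x r) := by
  simpa [mul_div_cancel₀] using (hμ x (r / 2) (half_pos hr)).1

theorem measure_ball_ne_top (hμ : IsDoublingWith μ C) (x : X) (r : ℝ) : μ (ball x r) ≠ ⊤ := by
  rcases le_or_gt r 0 with hr | hr
  · simp [ball_eq_empty.2 hr]
  · obtain ⟨-, hle, hlt⟩ := hμ x r hr
    exact ne_top_of_le_ne_top hlt.ne ((measure_mono (ball_subset_ball (by linarith))).trans hle)

theorem mono (hμ : IsDoublingWith μ C) {C' : NNReal} (h : C ≤ C') : IsDoublingWith μ C' := by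
  intro x r hr
  obtain ⟨hpos, hle, -⟩ := hμ x r hr
  exact ⟨hpos, hle.trans (by gcongr),
    ENNReal.mul_lt_top ENNReal.coe_lt_top (hμ.measure_ball_ne_top x r).lt_top⟩

theorem measure_ball_two_pow_mul_le (hμ : IsDoublingWith μ C) (x : X) {r : ℝ} (hr : 0 < r)
    (k : ℕ) : μ (ball x (2 ^ k * r)) ≤ (C : ENNReal) ^ k * μ (ball x r) := by
  induction k with
  | zero => simp
  | succ k ih =>
    calc μ (ball x (2 ^ (k + 1) * r)) = μ (ball x (2 * (2 ^ k * r))) := by ring_nf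
      _ ≤ C * μ (ball x (2 ^ k * r)) := (hμ x _ (by positivity)).2.1
      _ ≤ C * (C ^ k * μ (ball x r)) := by gcongr
      _ = (C : ENNReal) ^ (k + 1) * μ (ball x r) := by ring

/-- The annulus supplied by uniform perfectness contains a ball `B(z,r)` disjoint from `B(x,r)`
and comparable to `B(x, 4Dr)`, so `B(x,r)` misses a fixed fraction of `B(x, 4Dr)`. -/
theorem toReal_measure_ball_le_one_sub_mul [OpensMeasurableSpace X] (hμ : IsDoublingWith μ C)
    {D : ℝ} (hD : 1 ≤ D) (hUP : UniformlyPerfectWith X D) {k : ℕ} (hk : 6 * D ≤ 2 ^ k)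
    {x : X} {r : ℝ} (hr : 0 < r) (hx : ((Set.univ : Set X) \ ball x (2 * D * r)).Nonempty) :
    (μ (ball x r)).toReal ≤ (1 - ((C : ℝ) ^ k)⁻¹) * (μ (ball x (4 * D * r))).toReal := by
  obtain ⟨z, hz, hz'⟩ := hUP x (2 * D * r) (by positivity) hx
  have hzx : dist z x < 2 * D * r := hz
  have hzx' : 2 * r ≤ dist z x := by
    simpa [mem_ball, show 2 * D * r / D = 2 * r by field_simp] using hz'
  have hdisj : Disjoint (ball x r) (ball z r) :=
    ball_disjoint_ball (by rw [dist_comm]; linarith)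
  have hsub : ball x r ∪ ball z r ⊆ ball x (4 * D * r) :=
    union_subset (ball_subset_ball (by nlinarith)) (ball_subset_ball' (by nlinarith))
  have hcov : ball x (4 * D * r) ⊆ ball z (2 ^ k * r) :=
    ball_subset_ball' (by rw [dist_comm]; nlinarith)
  have hadd : μ (ball x r) + μ (ball z r) ≤ μ (ball x (4 * D * r)) := by
    rw [← measure_union hdisj measurableSet_ball]
    exact measure_mono hsub
  have hdbl : μ (ball x (4 * D * r)) ≤ (C : ENNReal) ^ k * μ (ball z r) :=
    (measure_mono hcov).trans (hμ.measure_ball_two_pow_mul_le z hr k)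
  have hfin := hμ.measure_ball_ne_top
  have hadd' := ENNReal.toReal_mono (hfin x _) hadd
  rw [ENNReal.toReal_add (hfin x r) (hfin z r)] at hadd'
  have hdbl' := ENNReal.toReal_mono
    (ENNReal.mul_ne_top (ENNReal.pow_ne_top ENNReal.coe_ne_top) (hfin z r)) hdbl
  rw [ENNReal.toReal_mul, ENNReal.toReal_pow, ENNReal.coe_toReal] at hdbl'
  have hpos : 0 < (μ (ball x (4 * D * r))).toReal :=
    ENNReal.toReal_pos (hμ.measure_ball_pos x (by positivity)).ne' (hfin x _)
  have hCk : 0 < (C : ℝ) ^ k := pos_of_mul_pos_left (hpos.trans_le hdbl') ENNReal.toReal_nonneg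
  have hfrac := (inv_mul_le_iff₀ hCk).2 hdbl'
  rw [sub_mul, one_mul]
  linarith

theorem toReal_measure_ball_le_pow_mul [OpensMeasurableSpace X] (hμ : IsDoublingWith μ C)
    (hC : 1 ≤ C) {D : ℝ} (hD : 1 ≤ D) (hUP : UniformlyPerfectWith X D) {k : ℕ}
    (hk : 6 * D ≤ 2 ^ k) {x : X} {R : ℝ} (hR : ((Set.univ : Set X) \ ball x R).Nonempty)
    (m : ℕ) {r : ℝ} (hr : 0 < r) (hrR : (4 * D) ^ m * r ≤ R) :
    (μ (ball x r)).toReal ≤ (1 - ((C : ℝ) ^ k)⁻¹) ^ m * (μ (ball x (2 * R))).toReal := by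
  induction m generalizing r with
  | zero =>
    rw [pow_zero, one_mul] at hrR ⊢
    exact ENNReal.toReal_mono (hμ.measure_ball_ne_top x _)
      (measure_mono (ball_subset_ball (by linarith)))
  | succ m ih =>
    have hθ : 0 ≤ 1 - ((C : ℝ) ^ k)⁻¹ :=
      sub_nonneg.2 (inv_le_one_of_one_le₀ (one_le_pow₀ (by exact_mod_cast hC)))
    have hrR' : (4 * D) ^ m * (4 * D * r) ≤ R := by rwa [← mul_assoc, ← pow_succ]
    have h4Dr : 4 * D * r ≤ (4 * D) ^ m * (4 * D * r) :=
      le_mul_of_one_le_left (by positivity) (one_le_pow₀ (by linarith))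
    have hstep := hμ.toReal_measure_ball_le_one_sub_mul hD hUP hk hr
      (hR.mono (sdiff_subset_sdiff_right (ball_subset_ball (by nlinarith))))
    calc (μ (ball x r)).toReal
        ≤ (1 - ((C : ℝ) ^ k)⁻¹) * (μ (ball x (4 * D * r))).toReal := hstep
      _ ≤ (1 - ((C : ℝ) ^ k)⁻¹) * ((1 - ((C : ℝ) ^ k)⁻¹) ^ m * (μ (ball x (2 * R))).toReal) :=
        mul_le_mul_of_nonneg_left (ih (by positivity) hrR') hθ
      _ = (1 - ((C : ℝ) ^ k)⁻¹) ^ (m + 1) * (μ (ball x (2 * R))).toReal := by ring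

theorem exists_hasBallDecay [OpensMeasurableSpace X] (hμ : IsDoublingWith μ C) (hC : 1 < C)
    {D : ℝ} (hD : 1 ≤ D) (hUP : UniformlyPerfectWith X D) :
    ∃ K ε : ℝ, 0 < K ∧ 0 < ε ∧ HasBallDecay μ K ε := by
  obtain ⟨k, hk⟩ := pow_unbounded_of_one_lt (6 * D) (one_lt_two : (1 : ℝ) < 2)
  have hk0 : k ≠ 0 := by rintro rfl; norm_num at hk; linarith
  set θ := 1 - ((C : ℝ) ^ k)⁻¹
  have hCk : 1 < (C : ℝ) ^ k := one_lt_pow₀ (by exact_mod_cast hC) hk0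
  have hθ0 : 0 < θ := sub_pos.2 (inv_lt_one_of_one_lt₀ hCk)
  have hθ1 : θ < 1 := sub_lt_self _ (by positivity)
  refine ⟨θ⁻¹, Real.logb (4 * D) θ⁻¹, by positivity,
    Real.logb_pos (by linarith) ((one_lt_inv₀ hθ0).2 hθ1), ?_⟩
  intro x r R hr hrR hR
  have hR0 : 0 < R := hr.trans_le hrR
  obtain ⟨m, hm, hθm⟩ := exists_pow_le_inv_mul_rpow hθ0 hθ1 (by linarith : 1 < 4 * D)
    (div_pos hr hR0) ((div_le_one hR0).2 hrR)
  have hreal := hμ.toReal_measure_ball_le_pow_mul hC.le hD hUP hk.le hR m hr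
    (by rwa [mul_div, div_le_one hR0] at hm)
  have hfin := hμ.measure_ball_ne_top
  rw [← ENNReal.ofReal_toReal (hfin x r), ← ENNReal.ofReal_toReal (hfin x (2 * R)),
    ← ENNReal.ofReal_mul (by positivity)]
  exact ENNReal.ofReal_le_ofReal (hreal.trans (by gcongr))

end IsDoublingWith

namespace RegularStructure

variable {X : Type*} [MetricSpace X] [MeasurableSpace X] {α : ℕ → ℝ} (S : RegularStructure X α)

theorem eq_of_mem_Q {n i j : ℕ} (hi : i ∈ S.idx n) (hj : j ∈ S.idx n) {x : X}
    (hxi : x ∈ S.Q n i) (hxj : x ∈ S.Q n j) : i = j := by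
  by_contra hij
  exact (S.pairwise_disj n i hi j hj hij).subset ⟨hxi, hxj⟩

theorem Q_subset_of_mem {k m i j : ℕ} (hmk : m ≤ k) (hi : i ∈ S.idx k) (hj : j ∈ S.idx m)
    {x : X} (hxi : x ∈ S.Q k i) (hxj : x ∈ S.Q m j) : S.Q k i ⊆ S.Q m j :=
  (S.nested k m hmk i hi j hj).resolve_left fun h => h.subset ⟨hxi, hxj⟩

theorem measure_Q_pos {μ : Measure X} {C : NNReal} (hμ : IsDoublingWith μ C) {n i : ℕ}
    (hi : i ∈ S.idx n) : 0 < μ (S.Q n i) :=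
  (hμ.measure_ball_pos _ (S.rad_pos n i hi)).trans_le (measure_mono (S.ball_subset n i hi))

theorem measure_Q_ne_top {μ : Measure X} {C : NNReal} (hμ : IsDoublingWith μ C) {n i : ℕ}
    (hi : i ∈ S.idx n) : μ (S.Q n i) ≠ ⊤ :=
  ne_top_of_le_ne_top (hμ.measure_ball_ne_top _ _) (measure_mono (S.subset_ball n i hi))

/-- The index `j(i)` of the `(n+1)`-cube containing the center `x_{n,i}`. -/
noncomputable def centerChild (n i : ℕ) : ℕ :=
  (S.cover (n + 1) (S.ctr n i)).choose

theorem centerChild_mem (n i : ℕ) : S.centerChild n i ∈ S.idx (n + 1) :=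
  (S.cover (n + 1) (S.ctr n i)).choose_spec.1

theorem ctr_mem_Q_centerChild (n i : ℕ) : S.ctr n i ∈ S.Q (n + 1) (S.centerChild n i) :=
  (S.cover (n + 1) (S.ctr n i)).choose_spec.2

theorem Q_diff_Q_centerChild_subset_level {n i : ℕ} (hi : i ∈ S.idx n) :
    S.Q n i \ S.Q (n + 1) (S.centerChild n i) ⊆ S.level n :=
  fun _ hx => ⟨i, hi, _, S.centerChild_mem n i, S.ctr_mem_Q_centerChild n i, hx⟩

/-- A cube `Q_{n+1,i} = X` would contain the center of an `n`-cube, hence be its center child,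
contradicting the last clause of (IV). -/
theorem exists_not_mem_Q {n i : ℕ} (hn : n ≠ 0) (hi : i ∈ S.idx n) : ∃ y, y ∉ S.Q n i := by
  obtain ⟨n, rfl⟩ := Nat.exists_eq_succ_of_ne_zero hn
  by_contra! hall
  obtain ⟨i', hi', -⟩ := S.cover n (S.ctr (n + 1) i)
  obtain ⟨y, -, hy⟩ := S.center_proper n i' hi' _ (S.centerChild_mem n i')
    (S.ctr_mem_Q_centerChild n i')
  obtain rfl := S.eq_of_mem_Q hi (S.centerChild_mem n i') (hall _) (S.ctr_mem_Q_centerChild n i')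
  exact hy (hall y)

theorem exists_Q_subset_level [Nonempty X] (n : ℕ) :
    ∃ i ∈ S.idx n, ∀ m < n, S.Q n i ⊆ S.level m := by
  induction n with
  | zero =>
    obtain ⟨i, hi, -⟩ := S.cover 0 (Classical.arbitrary X)
    exact ⟨i, hi, fun m hm => absurd hm m.not_lt_zero⟩
  | succ n ih =>
    obtain ⟨i, hi, hlev⟩ := ih
    obtain ⟨p, hpi, hpj⟩ := S.center_proper n i hi _ (S.centerChild_mem n i)
      (S.ctr_mem_Q_centerChild n i)
    obtain ⟨k, hk, hpk⟩ := S.cover (n + 1) p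
    have hki : S.Q (n + 1) k ⊆ S.Q n i := S.Q_subset_of_mem n.le_succ hk hi hpk hpi
    have hkj : S.Q (n + 1) k ⊆ S.Q n i \ S.Q (n + 1) (S.centerChild n i) := fun w hw =>
      ⟨hki hw, fun hw' => hpj (S.eq_of_mem_Q hk (S.centerChild_mem n i) hw hw' ▸ hpk)⟩
    refine ⟨k, hk, fun m hm => ?_⟩
    rcases Nat.lt_succ_iff_lt_or_eq.1 hm with hm | rfl
    · exact hki.trans (hlev m hm)
    · exact hkj.trans (S.Q_diff_Q_centerChild_subset_level hi)

/-- By (IV), `Q_{n+1,j(i)}` lies in `B(x_{n,i}, 2C₁r_{n+1,j(i)})` with `2C₁r_{n+1,j(i)} ≤ r_{n,i}/2`,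
and `B(x_{n,i}, r_{n,i}/2) ≠ X`, so the decay applies with `R = r_{n,i}/2`. -/
theorem measure_Q_centerChild_le {μ : Measure X} {K ε : ℝ} (hμ : HasBallDecay μ K ε)
    (hK : 0 ≤ K) (hε : 0 ≤ ε) {n i : ℕ} (hn : n ≠ 0) (hi : i ∈ S.idx n)
    (hsmall : 4 * S.C₁ * S.C₂ * α n ^ S.d ≤ 1) :
    μ (S.Q (n + 1) (S.centerChild n i)) ≤
      ENNReal.ofReal (K * (4 * S.C₁ * S.C₂ * α n ^ S.d) ^ ε) * μ (S.Q n i) := by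
  set j := S.centerChild n i
  set x := S.ctr n i
  set r := S.rad n i
  set r' := S.rad (n + 1) j
  have hj := S.centerChild_mem n i
  have hr : 0 < r := S.rad_pos n i hi
  have hr' : 0 < r' := S.rad_pos (n + 1) j hj
  have hC₁ := S.one_le_C₁
  have hr'r : r' ≤ S.C₂ * α n ^ S.d * r :=
    S.center_upper n i hi j hj (S.ctr_mem_Q_centerChild n i)
  have hratio : 4 * S.C₁ * r' / r ≤ 4 * S.C₁ * S.C₂ * α n ^ S.d := by
    rw [div_le_iff₀ hr]
    nlinarith
  have hQj : S.Q (n + 1) j ⊆ ball x (2 * S.C₁ * r') := by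
    have hxy : dist x (S.ctr (n + 1) j) < S.C₁ * r' :=
      S.subset_ball (n + 1) j hj (S.ctr_mem_Q_centerChild n i)
    refine (S.subset_ball (n + 1) j hj).trans (ball_subset_ball' ?_)
    rw [dist_comm]
    linarith
  have hcompl : ((Set.univ : Set X) \ ball x (r / 2)).Nonempty := by
    obtain ⟨y, hy⟩ := S.exists_not_mem_Q hn hi
    exact ⟨y, mem_univ y, fun hyx => hy (S.ball_subset n i hi (ball_subset_ball (by linarith) hyx))⟩
  have hsmall' : 4 * S.C₁ * r' ≤ r := (div_le_one hr).1 (hratio.trans hsmall)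
  have hdecay := hμ x (2 * S.C₁ * r') (r / 2) (by positivity) (by linarith) hcompl
  rw [show 2 * S.C₁ * r' / (r / 2) = 4 * S.C₁ * r' / r by field_simp; ring,
    mul_div_cancel₀ r two_ne_zero] at hdecay
  calc μ (S.Q (n + 1) j) ≤ μ (ball x (2 * S.C₁ * r')) := measure_mono hQj
    _ ≤ ENNReal.ofReal (K * (4 * S.C₁ * r' / r) ^ ε) * μ (ball x r) := hdecay
    _ ≤ ENNReal.ofReal (K * (4 * S.C₁ * S.C₂ * α n ^ S.d) ^ ε) * μ (S.Q n i) := by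
      gcongr
      exact S.ball_subset n i hi

theorem measure_Q_diff_level_le {μ : Measure X} {c : ENNReal} {n₀ i₀ n : ℕ}
    (hi₀ : i₀ ∈ S.idx n₀) (hn : n₀ ≤ n)
    (hc : ∀ i ∈ S.idx n, μ (S.Q (n + 1) (S.centerChild n i)) ≤ c * μ (S.Q n i)) :
    μ (S.Q n₀ i₀ \ S.level n) ≤ c * μ (S.Q n₀ i₀) := by
  set T := {i | i ∈ S.idx n ∧ S.Q n i ⊆ S.Q n₀ i₀}
  have hcover : S.Q n₀ i₀ \ S.level n ⊆ ⋃ i ∈ T, S.Q (n + 1) (S.centerChild n i) := by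
    rintro w ⟨hw₀, hw⟩
    obtain ⟨i, hi, hwi⟩ := S.cover n w
    refine mem_biUnion ⟨hi, S.Q_subset_of_mem hn hi hi₀ hwi hw₀⟩ ?_
    by_contra hwj
    exact hw (S.Q_diff_Q_centerChild_subset_level hi ⟨hwi, hwj⟩)
  have hdisj : T.PairwiseDisjoint (S.Q n) := fun i hi j hj hij =>
    disjoint_iff_inter_eq_empty.2 (S.pairwise_disj n i hi.1 j hj.1 hij)
  calc μ (S.Q n₀ i₀ \ S.level n)
      ≤ ∑' i : T, μ (S.Q (n + 1) (S.centerChild n i)) :=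
        (measure_mono hcover).trans (measure_biUnion_le μ T.to_countable _)
    _ ≤ ∑' i : T, c * μ (S.Q n i) := ENNReal.tsum_le_tsum fun i => hc i i.2.1
    _ = c * μ (⋃ i ∈ T, S.Q n i) := by
      rw [ENNReal.tsum_mul_left, measure_biUnion T.to_countable hdisj fun i hi => S.borel n i hi.1]
    _ ≤ c * μ (S.Q n₀ i₀) := by
      gcongr
      exact iUnion₂_subset fun i hi => hi.2

theorem measure_Q_diff_limitSet_le {μ : Measure X} {δ : ℕ → ENNReal} {n₀ i₀ : ℕ}
    (hi₀ : i₀ ∈ S.idx n₀) (hsurv : ∀ m < n₀, S.Q n₀ i₀ ⊆ S.level m)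
    (hδ : ∀ n ≥ n₀, ∀ i ∈ S.idx n, μ (S.Q (n + 1) (S.centerChild n i)) ≤ δ n * μ (S.Q n i)) :
    μ (S.Q n₀ i₀ \ S.limitSet) ≤ (∑' k, δ (k + n₀)) * μ (S.Q n₀ i₀) := by
  have hcover : S.Q n₀ i₀ \ S.limitSet ⊆ ⋃ k, S.Q n₀ i₀ \ S.level (k + n₀) := by
    rintro w ⟨hw₀, hw⟩
    obtain ⟨n, hn⟩ : ∃ n, w ∉ S.level n := by simpa [limitSet] using hw
    have hn₀ : n₀ ≤ n := not_lt.1 fun h => hn (hsurv n h hw₀)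
    exact mem_iUnion.2 ⟨n - n₀, hw₀, by rwa [Nat.sub_add_cancel hn₀]⟩
  calc μ (S.Q n₀ i₀ \ S.limitSet)
      ≤ ∑' k, μ (S.Q n₀ i₀ \ S.level (k + n₀)) := (measure_mono hcover).trans (measure_iUnion_le _)
    _ ≤ ∑' k, δ (k + n₀) * μ (S.Q n₀ i₀) := ENNReal.tsum_le_tsum fun k =>
        S.measure_Q_diff_level_le hi₀ (Nat.le_add_left n₀ k) (hδ _ (Nat.le_add_left n₀ k))
    _ = (∑' k, δ (k + n₀)) * μ (S.Q n₀ i₀) := ENNReal.tsum_mul_right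

end RegularStructure

theorem regular_set_fat_of_ell_zero_general {X : Type*} [MetricSpace X] [MeasurableSpace X]
    [BorelSpace X]
    (hup : UniformlyPerfect X)
    (α : ℕ → ℝ) (hα : ∀ n, 0 < α n ∧ α n < 1)
    (E : Set X) (hE : IsRegularSet α E)
    (hsum : ∀ p : ℝ, 0 < p → Summable (fun n => α n ^ p)) :
    ∀ μ : Measure X, IsDoublingMeasure μ → 0 < μ E := by
  rintro μ ⟨C, hC, hμ⟩
  obtain ⟨S, rfl⟩ := hE
  obtain ⟨⟨a, -⟩, D, hD, hUP⟩ := hup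
  have : Nonempty X := ⟨a⟩
  obtain ⟨K, ε, hK, hε, hdecay⟩ := (hμ.mono (le_add_of_nonneg_right zero_le_one)).exists_hasBallDecay
    (lt_add_of_le_of_pos hC zero_lt_one) hD hUP
  set c := 4 * S.C₁ * S.C₂
  have hc : 0 ≤ c := by have := S.one_le_C₁; have := S.one_le_C₂; positivity
  have hβ := summable_mul_rpow_of_forall_summable_rpow (fun n => (hα n).1.le) hsum hc S.d_pos hε
  set δ : ℕ → ENNReal := fun n => ENNReal.ofReal (K * (c * α n ^ S.d) ^ ε)
  have hsmall : ∀ᶠ n in atTop, c * α n ^ S.d ≤ 1 :=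
    (hβ.tendsto_atTop_zero.eventually_lt_const zero_lt_one).mono fun n hn =>
      le_of_not_gt fun h => lt_asymm hn (Real.one_lt_rpow h hε)
  have htail : ∀ᶠ n in atTop, ∑' k, δ (k + n) < 1 := by
    refine (ENNReal.tendsto_sum_nat_add δ ?_).eventually_lt_const zero_lt_one
    rw [← ENNReal.ofReal_tsum_of_nonneg (fun n =>
      mul_nonneg hK.le (Real.rpow_nonneg (mul_nonneg hc (Real.rpow_nonneg (hα n).1.le _)) _))
      (hβ.mul_left K)]
    exact ENNReal.ofReal_ne_top
  obtain ⟨n₀, hn₀⟩ := (hsmall.and (htail.and (eventually_ne_atTop 0))).exists_forall_of_atTop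
  obtain ⟨i₀, hi₀, hsurv⟩ := S.exists_Q_subset_level n₀
  refine measure_pos_of_measure_diff_le_mul (hn₀ n₀ le_rfl).2.1 (S.measure_Q_pos hμ hi₀).ne'
    (S.measure_Q_ne_top hμ hi₀) (S.measure_Q_diff_limitSet_le hi₀ hsurv fun n hn i hi => ?_)
  exact S.measure_Q_centerChild_le hdecay hK.le hε.le (hn₀ n hn).2.2 hi (hn₀ n hn).1

/-- `(α n) ∈ ℓ⁰` implies `E` is fat. -/
theorem regular_set_fat_of_ell_zero {X : Type*} [MetricSpace X] [MeasurableSpace X]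
    [BorelSpace X] [CompleteSpace X]
    (hX : DoublingSpace X) (hup : UniformlyPerfect X)
    (α : ℕ → ℝ) (hα : ∀ n, 0 < α n ∧ α n < 1)
    (E : Set X) (hE : IsRegularSet α E)
    (hsum : ∀ p : ℝ, 0 < p → Summable (fun n => α n ^ p)) :
    ∀ μ : Measure X, IsDoublingMeasure μ → 0 < μ E :=
  regular_set_fat_of_ell_zero_general hup α hα E hE hsum
end

section
/- Let X be a doubling, uniformly perfect metric space and let (α_n) be a sequence with 0 < α_n < 1 and α_n → 0 as n → ∞. Then there exist N ∈ ℕ and a set E ⊆ X which is (β_n)-regular for the shifted sequence β_n := α_{N+n}. -/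
open MeasureTheory Metric Set Filter

namespace RegAux
variable {X : Type*} [MetricSpace X]

/-- A separated set intersected with a closed ball is finite, in a doubling space. -/
lemma finite_separated (hX : DoublingSpace X) {S : Set X} {d : ℝ} (hd : 0 < d)
    (hS : ∀ p ∈ S, ∀ q ∈ S, p ≠ q → d ≤ dist p q) (x : X) (r : ℝ) :
    (S ∩ closedBall x r).Finite := by
  obtain ⟨N, hN⟩ := hX
  set R : ℝ := r + 1 with hR
  rcases le_or_gt R 0 with hR0 | hR0
  · have : closedBall x r = ∅ := by
      apply closedBall_eq_empty.2; linarith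
    rw [this]; simp
  -- iterated covering
  have cover : ∀ j : ℕ, ∃ s : Finset X, ball x R ⊆ ⋃ y ∈ s, ball y (R / 2 ^ j) := by
    intro j
    induction j with
    | zero => exact ⟨{x}, by simp⟩
    | succ j ih =>
      obtain ⟨s, hs⟩ := ih
      have hpos : 0 < R / 2 ^ j := by positivity
      classical
      refine ⟨s.biUnion (fun y => (hN y (R / 2 ^ j) hpos).choose), ?_⟩
      intro z hz
      obtain ⟨y, hy, hzy⟩ := mem_iUnion₂.1 (hs hz)
      have hspec := (hN y (R / 2 ^ j) hpos).choose_spec.2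
      obtain ⟨w, hw, hzw⟩ := mem_iUnion₂.1 (hspec hzy)
      refine mem_iUnion₂.2 ⟨w, Finset.mem_biUnion.2 ⟨y, hy, hw⟩, ?_⟩
      have : R / 2 ^ j / 2 = R / 2 ^ (j + 1) := by ring
      rwa [this] at hzw
  obtain ⟨j, hj⟩ : ∃ j : ℕ, 2 * R / d < 2 ^ j := by
    obtain ⟨j, hj⟩ := pow_unbounded_of_one_lt (2 * R / d) (by norm_num : (1:ℝ) < 2)
    exact ⟨j, hj⟩
  obtain ⟨s, hs⟩ := cover j
  have hsub : S ∩ closedBall x r ⊆ ⋃ y ∈ s, S ∩ ball y (R / 2 ^ j) := by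
    intro p ⟨hpS, hpB⟩
    have : p ∈ ball x R := by
      rw [mem_ball]; rw [mem_closedBall] at hpB; linarith
    obtain ⟨y, hy, hpy⟩ := mem_iUnion₂.1 (hs this)
    exact mem_iUnion₂.2 ⟨y, hy, hpS, hpy⟩
  apply Set.Finite.subset _ hsub
  apply Set.Finite.biUnion s.finite_toSet
  intro y _
  apply Set.Subsingleton.finite
  intro p ⟨hpS, hpB⟩ q ⟨hqS, hqB⟩
  by_contra hpq
  have h1 : dist p q < d := by
    have h2 : 2 * (R / 2 ^ j) < d := by
      rw [div_lt_iff₀ hd] at hj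
      have hp : (0:ℝ) < 2 ^ j := by positivity
      rw [mul_div_assoc', div_lt_iff₀ hp]
      linarith
    calc dist p q ≤ dist p y + dist q y := dist_triangle_right _ _ _
      _ < R / 2 ^ j + R / 2 ^ j := add_lt_add (mem_ball.1 hpB) (mem_ball.1 hqB)
      _ < d := by linarith
  exact absurd (hS p hpS q hqS hpq) (not_le.2 h1)

/-- Existence of a maximal `d`-separated set containing a given separated set. -/
lemma exists_maximal_net (A : Set X) (d : ℝ) (hd : 0 < d)
    (hA : ∀ p ∈ A, ∀ q ∈ A, p ≠ q → d ≤ dist p q) :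
    ∃ S : Set X, A ⊆ S ∧ (∀ p ∈ S, ∀ q ∈ S, p ≠ q → d ≤ dist p q) ∧
      ∀ x : X, ∃ p ∈ S, dist x p < d := by
  set 𝒮 : Set (Set X) := {S | A ⊆ S ∧ ∀ p ∈ S, ∀ q ∈ S, p ≠ q → d ≤ dist p q} with h𝒮
  have hzorn := zorn_subset_nonempty 𝒮 ?_ A ⟨subset_rfl, hA⟩
  · obtain ⟨M, hAM, hMmax⟩ := hzorn
    have hM𝒮 : M ∈ 𝒮 := hMmax.1
    refine ⟨M, hM𝒮.1, hM𝒮.2, ?_⟩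
    intro x
    by_contra hx
    push_neg at hx
    have hins : insert x M ∈ 𝒮 := by
      constructor
      · exact hM𝒮.1.trans (subset_insert _ _)
      · rintro p (rfl | hp) q (rfl | hq) hpq
        · exact absurd rfl hpq
        · exact hx q hq
        · rw [dist_comm]; exact hx p hp
        · exact hM𝒮.2 p hp q hq hpq
    have hsub : insert x M ⊆ M := hMmax.2 hins (subset_insert _ _)
    have hxM : x ∈ M := hsub (mem_insert x M)
    have := hx x hxM
    simp at this
    linarith
  · intro c hc hchain hcne
    refine ⟨⋃₀ c, ⟨?_, ?_⟩, fun s hs => subset_sUnion_of_mem hs⟩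
    · obtain ⟨s, hs⟩ := hcne
      exact (hc hs).1.trans (subset_sUnion_of_mem hs)
    · rintro p hp q hq hpq
      obtain ⟨s, hs, hps⟩ := hp
      obtain ⟨t, ht, hqt⟩ := hq
      rcases hchain.total hs ht with h | h
      · exact (hc ht).2 p (h hps) q hqt hpq
      · exact (hc hs).2 p hps q (h hqt) hpq

end RegAux

namespace RegAux
variable {X : Type*} [MetricSpace X]

lemma exists_nets (δ : ℕ → ℝ) (hδ : ∀ k, 0 < δ k) (hmono : ∀ k, δ (k+1) ≤ δ k) :
    ∃ 𝒩 : ℕ → Set X, ∀ k,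
      (∀ p ∈ 𝒩 k, ∀ q ∈ 𝒩 k, p ≠ q → δ k ≤ dist p q) ∧
      (∀ x : X, ∃ p ∈ 𝒩 k, dist x p < δ k) ∧ 𝒩 k ⊆ 𝒩 (k + 1) := by
  classical
  obtain ⟨S0, -, hsep0, hcov0⟩ := exists_maximal_net (∅ : Set X) (δ 0) (hδ 0) (by simp)
  choose F hF1 hF2 hF3 using fun (k : ℕ) (S : Set X)
    (h : ∀ p ∈ S, ∀ q ∈ S, p ≠ q → δ (k+1) ≤ dist p q) =>
      exists_maximal_net S (δ (k+1)) (hδ _) h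
  let G : ℕ → Set X := fun n => Nat.rec S0
    (fun k S => if h : (∀ p ∈ S, ∀ q ∈ S, p ≠ q → δ (k+1) ≤ dist p q) then F k S h else ∅) n
  have hsep : ∀ k, (∀ p ∈ G k, ∀ q ∈ G k, p ≠ q → δ k ≤ dist p q) ∧
      (∀ x : X, ∃ p ∈ G k, dist x p < δ k) := by
    intro k
    induction k with
    | zero => exact ⟨hsep0, hcov0⟩
    | succ k ih =>
      have h' : ∀ p ∈ G k, ∀ q ∈ G k, p ≠ q → δ (k+1) ≤ dist p q :=
        fun p hp q hq hpq => (hmono k).trans (ih.1 p hp q hq hpq)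
      have hGk : G (k+1) = F k (G k) h' := dif_pos h' 
      rw [hGk]
      exact ⟨hF2 k (G k) h', hF3 k (G k) h'⟩
  refine ⟨G, fun k => ⟨(hsep k).1, (hsep k).2, ?_⟩⟩
  have h' : ∀ p ∈ G k, ∀ q ∈ G k, p ≠ q → δ (k+1) ≤ dist p q :=
    fun p hp q hq hpq => (hmono k).trans ((hsep k).1 p hp q hq hpq)
  have hGk : G (k+1) = F k (G k) h' := dif_pos h' 
  rw [hGk]
  exact hF1 k (G k) h'

lemma exists_net_fun (hX : DoublingSpace X) (x₀ : X) (δ : ℕ → ℝ)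
    (hδ : ∀ k, 0 < δ k) (hmono : ∀ k, δ (k+1) ≤ δ k) :
    ∃ f : ℕ → ℕ → X,
      (∀ k i j, f k i ≠ f k j → δ k ≤ dist (f k i) (f k j)) ∧
      (∀ k (x : X), ∃ i, dist x (f k i) < δ k) ∧
      (∀ k, range (f k) ⊆ range (f (k+1))) ∧
      (∀ k (x : X) (r : ℝ), (range (f k) ∩ closedBall x r).Finite) := by
  obtain ⟨𝒩, h𝒩⟩ := exists_nets (X := X) δ hδ hmono
  have hcnt : ∀ k, (𝒩 k).Countable := by
    intro k
    have : 𝒩 k = ⋃ n : ℕ, (𝒩 k ∩ closedBall x₀ n) := by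
      ext p
      simp only [mem_iUnion, mem_inter_iff, mem_closedBall]
      constructor
      · intro hp
        exact ⟨⌈dist p x₀⌉₊, hp, Nat.le_ceil _⟩
      · rintro ⟨n, hp, -⟩; exact hp
    rw [this]
    exact countable_iUnion fun n =>
      (finite_separated hX (hδ k) (h𝒩 k).1 x₀ n).countable
  have hne : ∀ k, (𝒩 k).Nonempty := fun k => ((h𝒩 k).2.1 x₀).imp fun p hp => hp.1
  choose f hf using fun k => Set.Countable.exists_eq_range (hcnt k) (hne k)
  refine ⟨f, ?_, ?_, ?_, ?_⟩
  · intro k i j hne'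
    exact (h𝒩 k).1 _ (by rw [hf k]; exact mem_range_self i) _
      (by rw [hf k]; exact mem_range_self j) hne'
  · intro k x
    obtain ⟨p, hp, hd⟩ := (h𝒩 k).2.1 x
    rw [hf k] at hp
    obtain ⟨i, rfl⟩ := hp
    exact ⟨i, hd⟩
  · intro k
    rw [← hf k, ← hf (k+1)]
    exact (h𝒩 k).2.2
  · intro k x r
    rw [← hf k]
    exact finite_separated hX (hδ k) (h𝒩 k).1 x r

end RegAux

namespace RegAux
open scoped Classical
variable {X : Type*} [MetricSpace X]
variable {f : ℕ → ℕ → X} {δ : ℕ → ℝ}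

noncomputable def nearIdx (f : ℕ → ℕ → X) (δ : ℕ → ℝ) (k : ℕ) (x : X) : ℕ :=
  if ∃ i, dist x (f k i) < δ k / 2 then sInf {i | dist x (f k i) < δ k / 2}
  else sInf {i | dist x (f k i) < δ k}

noncomputable def near (f : ℕ → ℕ → X) (δ : ℕ → ℝ) (k : ℕ) (x : X) : X :=
  f k (nearIdx f δ k x)

noncomputable def anc (f : ℕ → ℕ → X) (δ : ℕ → ℝ) (k : ℕ) : ℕ → X → X
  | 0, w => w
  | m+1, w => if m+1 ≤ k then w else anc f δ k m (near f δ m w)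

lemma delta_mono (hδ : ∀ k, 0 < δ k) (hratio : ∀ k, 16 * δ (k+1) ≤ δ k)
    {k m : ℕ} (h : k ≤ m) : δ m ≤ δ k := by
  induction m, h using Nat.le_induction with
  | base => exact le_refl _
  | succ m hm ih => exact le_trans (by nlinarith [hδ (m+1), hratio m]) ih

lemma near_mem (k : ℕ) (x : X) : near f δ k x ∈ range (f k) := ⟨_, rfl⟩

lemma dist_near (hδ : ∀ k, 0 < δ k) (hcov : ∀ k (x : X), ∃ i, dist x (f k i) < δ k)
    (k : ℕ) (x : X) : dist x (near f δ k x) < δ k := by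
  rw [near, nearIdx]
  by_cases h : ∃ i, dist x (f k i) < δ k / 2
  · rw [if_pos h]
    have h2 : dist x (f k (sInf {i | dist x (f k i) < δ k / 2})) < δ k / 2 :=
      Nat.sInf_mem (h : {i | dist x (f k i) < δ k / 2}.Nonempty)
    have hk := hδ k
    linarith
  · rw [if_neg h]
    exact Nat.sInf_mem (hcov k x : {i | dist x (f k i) < δ k}.Nonempty)

lemma near_eq (hsep : ∀ k i j, f k i ≠ f k j → δ k ≤ dist (f k i) (f k j))
    (k : ℕ) (x z : X) (hz : z ∈ range (f k)) (hd : dist x z < δ k / 2) :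
    near f δ k x = z := by
  obtain ⟨i₀, rfl⟩ := hz
  have hE : ∃ i, dist x (f k i) < δ k / 2 := ⟨i₀, hd⟩
  rw [near, nearIdx, if_pos hE]
  have hmem : dist x (f k (sInf {i | dist x (f k i) < δ k / 2})) < δ k / 2 :=
    Nat.sInf_mem (hE : {i | dist x (f k i) < δ k / 2}.Nonempty)
  by_contra hne
  have := hsep k _ _ hne
  have htri : dist (f k (sInf {i | dist x (f k i) < δ k / 2})) (f k i₀)
      ≤ dist x (f k (sInf {i | dist x (f k i) < δ k / 2})) + dist x (f k i₀) :=
    dist_triangle_left _ _ _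
  linarith

lemma anc_self (k : ℕ) (w : X) : anc f δ k k w = w := by
  cases k with
  | zero => rfl
  | succ k => rw [anc, if_pos (le_refl _)]

lemma anc_step {k m : ℕ} (h : k ≤ m) (w : X) :
    anc f δ k (m+1) w = anc f δ k m (near f δ m w) := by
  rw [anc, if_neg (by omega)]

lemma anc_mem (hk : ∀ k (x : X), ∃ i, dist x (f k i) < δ k)
    {k m : ℕ} (h : k ≤ m) (w : X) (hw : w ∈ range (f m)) :
    anc f δ k m w ∈ range (f k) := by
  induction m, h using Nat.le_induction generalizing w with
  | base => rw [anc_self]; exact hw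
  | succ m hm ih =>
    rw [anc_step hm]
    exact ih _ (near_mem m w)

lemma anc_dist (hδ : ∀ k, 0 < δ k) (hratio : ∀ k, 16 * δ (k+1) ≤ δ k)
    (hcov : ∀ k (x : X), ∃ i, dist x (f k i) < δ k)
    {k m : ℕ} (h : k ≤ m) (w : X) :
    dist w (anc f δ k m w) ≤ 2 * (δ k - δ m) := by
  induction m, h using Nat.le_induction generalizing w with
  | base => rw [anc_self, dist_self]; linarith
  | succ m hm ih =>
    rw [anc_step hm]
    calc dist w (anc f δ k m (near f δ m w))
        ≤ dist w (near f δ m w) + dist (near f δ m w) (anc f δ k m (near f δ m w)) :=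
          dist_triangle _ _ _
      _ ≤ δ m + 2 * (δ k - δ m) := by
          have h1 := dist_near hδ hcov m w
          have h2 := ih (near f δ m w)
          linarith
      _ ≤ 2 * (δ k - δ (m+1)) := by nlinarith [hratio m, hδ (m+1)]

lemma anc_dist' (hδ : ∀ k, 0 < δ k) (hratio : ∀ k, 16 * δ (k+1) ≤ δ k)
    (hcov : ∀ k (x : X), ∃ i, dist x (f k i) < δ k)
    {k m : ℕ} (h : k ≤ m) (w : X) :
    dist w (anc f δ k m w) ≤ 2 * δ k := by
  have := anc_dist hδ hratio hcov h w
  have := hδ m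
  linarith

lemma anc_succ {k m : ℕ} (h : k + 1 ≤ m) (w : X) :
    anc f δ k m w = near f δ k (anc f δ (k+1) m w) := by
  induction m, h using Nat.le_induction generalizing w with
  | base =>
    rw [anc_step (le_refl k), anc_self, anc_self]
  | succ m hm ih =>
    rw [anc_step (by omega : k ≤ m), anc_step hm, ih]

end RegAux

namespace RegAux
open scoped Classical
variable {X : Type*} [MetricSpace X]
variable {f : ℕ → ℕ → X} {δ : ℕ → ℝ}

noncomputable def labIdx (f : ℕ → ℕ → X) (δ : ℕ → ℝ) : (k : ℕ) → X → ℕ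
  | k, x =>
    sInf {i | {m | k ≤ m ∧ anc f δ k m (near f δ m x) = f k i ∧
      ∀ j, j < k → anc f δ j m (near f δ m x) = f j (labIdx f δ j x)}.Infinite}
termination_by k _ => k

def Sset (f : ℕ → ℕ → X) (δ : ℕ → ℝ) (k i : ℕ) (x : X) : Set ℕ :=
  {m | k ≤ m ∧ anc f δ k m (near f δ m x) = f k i ∧
    ∀ j, j < k → anc f δ j m (near f δ m x) = f j (labIdx f δ j x)}

lemma labIdx_def (k : ℕ) (x : X) :
    labIdx f δ k x = sInf {i | (Sset f δ k i x).Infinite} := by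
  rw [labIdx]; rfl

lemma Sset_infinite (hδ : ∀ k, 0 < δ k) (hratio : ∀ k, 16 * δ (k+1) ≤ δ k)
    (hcov : ∀ k (x : X), ∃ i, dist x (f k i) < δ k)
    (hfin : ∀ k (x : X) (r : ℝ), (range (f k) ∩ closedBall x r).Finite) :
    ∀ (k : ℕ) (x : X), (Sset f δ k (labIdx f δ k x) x).Infinite := by
  intro k
  induction k using Nat.strong_induction_on with
  | _ k ih =>
  intro x
  have hU : {m | k ≤ m ∧ ∀ j, j < k →
      anc f δ j m (near f δ m x) = f j (labIdx f δ j x)}.Infinite := by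
    cases k with
    | zero =>
      have : {m : ℕ | 0 ≤ m ∧ ∀ j, j < 0 →
          anc f δ j m (near f δ m x) = f j (labIdx f δ j x)} = univ := by
        ext m; simp
      rw [this]
      exact Set.infinite_univ
    | succ k' =>
      have h1 := ih k' (Nat.lt_succ_self k') x
      apply (h1.diff (Set.finite_Iio (k'+1))).mono
      rintro m ⟨⟨hm1, hm2, hm3⟩, hm4⟩
      simp only [Set.mem_Iio, not_lt] at hm4
      refine ⟨hm4, fun j hj => ?_⟩
      rcases Nat.lt_succ_iff_lt_or_eq.1 hj with h | rfl
      · exact hm3 j h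
      · exact hm2
  have hT : ∃ i, (Sset f δ k i x).Infinite := by
    set U := {m | k ≤ m ∧ ∀ j, j < k →
      anc f δ j m (near f δ m x) = f j (labIdx f δ j x)} with hUdef
    have hV : (range (f k) ∩ closedBall x (2 * δ k)).Finite := hfin k x (2 * δ k)
    have hmemV : ∀ m ∈ U, anc f δ k m (near f δ m x) ∈
        range (f k) ∩ closedBall x (2 * δ k) := by
      intro m hm
      refine ⟨anc_mem hcov hm.1 _ (near_mem m x), ?_⟩
      rw [mem_closedBall, dist_comm]
      have h1 := dist_near hδ hcov m x
      have h2 := anc_dist hδ hratio hcov hm.1 (near f δ m x)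
      have h3 := dist_triangle x (near f δ m x) (anc f δ k m (near f δ m x))
      have := hδ m
      linarith
    by_contra hcon
    push_neg at hcon
    have hUfin : U.Finite := by
      have hsub : U ⊆ ⋃ y ∈ (range (f k) ∩ closedBall x (2 * δ k)),
          {m ∈ U | anc f δ k m (near f δ m x) = y} := by
        intro m hm
        exact mem_iUnion₂.2 ⟨_, hmemV m hm, hm, rfl⟩
      apply Set.Finite.subset _ hsub
      apply Set.Finite.biUnion hV
      intro y hy
      obtain ⟨i, hi⟩ := hy.1
      have : {m ∈ U | anc f δ k m (near f δ m x) = y} = Sset f δ k i x := by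
        ext m
        simp only [Sset, hUdef, mem_setOf_eq, mem_sep_iff]
        rw [← hi]
        tauto
      rw [this]
      exact hcon i
    exact hU hUfin
  have hne : {i | (Sset f δ k i x).Infinite}.Nonempty := hT
  rw [labIdx_def]
  exact Nat.sInf_mem hne

end RegAux

namespace RegAux
open scoped Classical
variable {X : Type*} [MetricSpace X]
variable {f : ℕ → ℕ → X} {δ : ℕ → ℝ}

def idxset (f : ℕ → ℕ → X) (k : ℕ) : Set ℕ := {i | ∀ i' < i, f k i' ≠ f k i}

lemma capture (hδ : ∀ k, 0 < δ k) (hratio : ∀ k, 16 * δ (k+1) ≤ δ k)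
    (hsep : ∀ k i j, f k i ≠ f k j → δ k ≤ dist (f k i) (f k j))
    (hcov : ∀ k (x : X), ∃ i, dist x (f k i) < δ k)
    (k i : ℕ) (x : X) (hd : dist x (f k i) < δ k / 4) {m : ℕ} (hm : k ≤ m) :
    anc f δ k m (near f δ m x) = f k i := by
  rcases eq_or_lt_of_le hm with rfl | hlt
  · rw [anc_self]
    exact near_eq hsep k x _ ⟨i, rfl⟩ (by linarith [hδ k])
  · have hk1m : k + 1 ≤ m := hlt
    rw [anc_succ hk1m]
    set u := anc f δ (k+1) m (near f δ m x) with hu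
    have hu1 : dist (near f δ m x) u ≤ 2 * δ (k+1) := anc_dist' hδ hratio hcov hk1m _
    have hu2 : dist x (near f δ m x) < δ m := dist_near hδ hcov m x
    have hmδ : δ m ≤ δ (k+1) := delta_mono hδ hratio hk1m
    have hrt := hratio k
    have hδk := hδ k
    have hd2 : dist u (f k i) < δ k / 2 := by
      calc dist u (f k i) ≤ dist u (near f δ m x) + dist (near f δ m x) x + dist x (f k i) :=
            dist_triangle4 _ _ _ _
        _ = dist (near f δ m x) u + dist x (near f δ m x) + dist x (f k i) := by
            rw [dist_comm u, dist_comm _ x]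
        _ < 2 * δ (k+1) + δ (k+1) + δ k / 4 := by linarith
        _ < δ k / 2 := by linarith
    exact near_eq hsep k u _ ⟨i, rfl⟩ hd2

lemma lab_mem_idxset (hδ : ∀ k, 0 < δ k) (hratio : ∀ k, 16 * δ (k+1) ≤ δ k)
    (hcov : ∀ k (x : X), ∃ i, dist x (f k i) < δ k)
    (hfin : ∀ k (x : X) (r : ℝ), (range (f k) ∩ closedBall x r).Finite)
    (k : ℕ) (x : X) : labIdx f δ k x ∈ idxset f k := by
  intro i' hi' heq
  have hinf := Sset_infinite hδ hratio hcov hfin k x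
  have hSeq : Sset f δ k i' x = Sset f δ k (labIdx f δ k x) x := by
    unfold Sset; rw [heq]
  have hmem : i' ∈ {i | (Sset f δ k i x).Infinite} := by
    rw [mem_setOf_eq, hSeq]; exact hinf
  have := Nat.sInf_le hmem
  rw [← labIdx_def] at this
  omega

lemma idxset_inj {k i i' : ℕ} (hi : i ∈ idxset f k) (hi' : i' ∈ idxset f k)
    (h : f k i = f k i') : i = i' := by
  rcases lt_trichotomy i i' with hlt | heq | hlt
  · exact absurd h (hi' i hlt)
  · exact heq
  · exact absurd h.symm (hi i' hlt)

lemma lab_capture (hδ : ∀ k, 0 < δ k) (hratio : ∀ k, 16 * δ (k+1) ≤ δ k)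
    (hsep : ∀ k i j, f k i ≠ f k j → δ k ≤ dist (f k i) (f k j))
    (hcov : ∀ k (x : X), ∃ i, dist x (f k i) < δ k)
    (hfin : ∀ k (x : X) (r : ℝ), (range (f k) ∩ closedBall x r).Finite)
    {k i : ℕ} (hi : i ∈ idxset f k) {x : X} (hd : dist x (f k i) < δ k / 4) :
    labIdx f δ k x = i := by
  obtain ⟨m, hm⟩ := (Sset_infinite hδ hratio hcov hfin k x).nonempty
  obtain ⟨hm1, hm2, -⟩ := hm
  have hc := capture hδ hratio hsep hcov k i x hd hm1
  exact idxset_inj (lab_mem_idxset hδ hratio hcov hfin k x) hi (hm2 ▸ hc ▸ rfl)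

lemma lab_outer (hδ : ∀ k, 0 < δ k) (hratio : ∀ k, 16 * δ (k+1) ≤ δ k)
    (hcov : ∀ k (x : X), ∃ i, dist x (f k i) < δ k)
    (hfin : ∀ k (x : X) (r : ℝ), (range (f k) ∩ closedBall x r).Finite)
    (k : ℕ) (x : X) : dist x (f k (labIdx f δ k x)) ≤ 2 * δ k := by
  obtain ⟨m, hm1, hm2, -⟩ := (Sset_infinite hδ hratio hcov hfin k x).nonempty
  rw [← hm2]
  have h1 := dist_near hδ hcov m x
  have h2 := anc_dist hδ hratio hcov hm1 (near f δ m x)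
  have h3 := dist_triangle x (near f δ m x) (anc f δ k m (near f δ m x))
  have := hδ m
  linarith

lemma lab_step (hδ : ∀ k, 0 < δ k) (hratio : ∀ k, 16 * δ (k+1) ≤ δ k)
    (hcov : ∀ k (x : X), ∃ i, dist x (f k i) < δ k)
    (hfin : ∀ k (x : X) (r : ℝ), (range (f k) ∩ closedBall x r).Finite)
    (k : ℕ) (x : X) :
    f k (labIdx f δ k x) = near f δ k (f (k+1) (labIdx f δ (k+1) x)) := by
  obtain ⟨m, hm1, hm2, hm3⟩ := (Sset_infinite hδ hratio hcov hfin (k+1) x).nonempty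
  have hchain := hm3 k (Nat.lt_succ_self k)
  rw [← hchain, ← hm2, anc_succ hm1]

lemma lab_congr (hδ : ∀ k, 0 < δ k) (hratio : ∀ k, 16 * δ (k+1) ≤ δ k)
    (hcov : ∀ k (x : X), ∃ i, dist x (f k i) < δ k)
    (hfin : ∀ k (x : X) (r : ℝ), (range (f k) ∩ closedBall x r).Finite)
    {m k : ℕ} (h : m ≤ k) {x y : X} (hxy : labIdx f δ k x = labIdx f δ k y) :
    labIdx f δ m x = labIdx f δ m y := by
  induction k, h using Nat.le_induction with
  | base => exact hxy
  | succ k hk ih =>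
    apply ih
    have h1 := lab_step hδ hratio hcov hfin k x
    have h2 := lab_step hδ hratio hcov hfin k y
    rw [hxy] at h1
    have := h1.trans h2.symm
    exact idxset_inj (lab_mem_idxset hδ hratio hcov hfin k x)
      (lab_mem_idxset hδ hratio hcov hfin k y) this

end RegAux

namespace RegAux
open scoped Classical
variable {X : Type*} [MetricSpace X]
variable {f : ℕ → ℕ → X} {δ : ℕ → ℝ}

lemma infinite_nat_iff {s : Set ℕ} : s.Infinite ↔ ∀ M, ∃ m ∈ s, M ≤ m := by
  constructor
  · intro hs M
    obtain ⟨m, hm⟩ := (hs.diff (Set.finite_Iio M)).nonempty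
    refine ⟨m, hm.1, ?_⟩
    have := hm.2
    simp only [Set.mem_Iio, not_lt] at this
    exact this
  · intro h hfin
    obtain ⟨M, hM⟩ := hfin.bddAbove
    obtain ⟨m, hm, hMm⟩ := h (M + 1)
    have := hM hm
    omega

variable [MeasurableSpace X] [OpensMeasurableSpace X]

lemma measurable_nearIdx_fiber (hcov : ∀ k (x : X), ∃ i, dist x (f k i) < δ k)
    (k i : ℕ) : MeasurableSet {x : X | nearIdx f δ k x = i} := by
  have hball : ∀ (c : ℝ) (j : ℕ), MeasurableSet {x : X | dist x (f k j) < c} := by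
    intro c j
    have : {x : X | dist x (f k j) < c} = ball (f k j) c := rfl
    rw [this]
    exact measurableSet_ball
  have hchar : {x : X | nearIdx f δ k x = i} =
      ({x : X | ∃ j, dist x (f k j) < δ k / 2} ∩
        ({x | dist x (f k i) < δ k / 2} ∩ ⋂ j ∈ Set.Iio i, {x | dist x (f k j) < δ k / 2}ᶜ)) ∪
      ({x : X | ∃ j, dist x (f k j) < δ k / 2}ᶜ ∩
        ({x | dist x (f k i) < δ k} ∩ ⋂ j ∈ Set.Iio i, {x | dist x (f k j) < δ k}ᶜ)) := by
    ext x
    simp only [mem_union, mem_inter_iff, mem_compl_iff, mem_iInter, mem_setOf_eq, Set.mem_Iio]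
    constructor
    · intro h
      by_cases hE : ∃ j, dist x (f k j) < δ k / 2
      · left
        rw [nearIdx, if_pos hE] at h
        refine ⟨hE, h ▸ Nat.sInf_mem (hE : {j | dist x (f k j) < δ k / 2}.Nonempty), ?_⟩
        intro j hj hcon
        have := Nat.sInf_le (show j ∈ {j | dist x (f k j) < δ k / 2} from hcon)
        omega
      · right
        rw [nearIdx, if_neg hE] at h
        refine ⟨hE, h ▸ Nat.sInf_mem ((hcov k x) : {j | dist x (f k j) < δ k}.Nonempty), ?_⟩
        intro j hj hcon
        have := Nat.sInf_le (show j ∈ {j | dist x (f k j) < δ k} from hcon)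
        omega
    · rintro (⟨hE, hi, hj⟩ | ⟨hE, hi, hj⟩)
      · rw [nearIdx, if_pos hE]
        refine le_antisymm (Nat.sInf_le hi) ?_
        by_contra hcon
        push_neg at hcon
        exact hj _ hcon (Nat.sInf_mem (hE : {j | dist x (f k j) < δ k / 2}.Nonempty))
      · rw [nearIdx, if_neg hE]
        refine le_antisymm (Nat.sInf_le hi) ?_
        by_contra hcon
        push_neg at hcon
        exact hj _ hcon (Nat.sInf_mem ((hcov k x) : {j | dist x (f k j) < δ k}.Nonempty))
  rw [hchar]
  have hEx : MeasurableSet {x : X | ∃ j, dist x (f k j) < δ k / 2} := by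
    have : {x : X | ∃ j, dist x (f k j) < δ k / 2} = ⋃ j, {x | dist x (f k j) < δ k / 2} := by
      ext x; simp
    rw [this]
    exact MeasurableSet.iUnion fun j => hball _ j
  refine MeasurableSet.union ?_ ?_
  · exact hEx.inter ((hball _ i).inter (MeasurableSet.biInter (Set.to_countable _)
      fun j _ => (hball _ j).compl))
  · exact hEx.compl.inter ((hball _ i).inter (MeasurableSet.biInter (Set.to_countable _)
      fun j _ => (hball _ j).compl))

lemma measurable_anc_fiber (hcov : ∀ k (x : X), ∃ i, dist x (f k i) < δ k)
    (k m : ℕ) (y : X) :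
    MeasurableSet {x : X | anc f δ k m (near f δ m x) = y} := by
  have : {x : X | anc f δ k m (near f δ m x) = y} =
      ⋃ i, ⋃ (_ : anc f δ k m (f m i) = y), {x : X | nearIdx f δ m x = i} := by
    ext x
    simp only [mem_iUnion, mem_setOf_eq]
    constructor
    · intro h
      exact ⟨nearIdx f δ m x, h, rfl⟩
    · rintro ⟨i, hi, hx⟩
      rw [near, hx]
      exact hi
  rw [this]
  exact MeasurableSet.iUnion fun i => MeasurableSet.iUnion fun _ =>
    measurable_nearIdx_fiber hcov m i

lemma measurable_lab_fiber (hδ : ∀ k, 0 < δ k) (hratio : ∀ k, 16 * δ (k+1) ≤ δ k)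
    (hcov : ∀ k (x : X), ∃ i, dist x (f k i) < δ k)
    (hfin : ∀ k (x : X) (r : ℝ), (range (f k) ∩ closedBall x r).Finite) :
    ∀ k i, MeasurableSet {x : X | labIdx f δ k x = i} := by
  intro k
  induction k using Nat.strong_induction_on with
  | _ k ih =>
  have hSm : ∀ i, MeasurableSet {x : X | (Sset f δ k i x).Infinite} := by
    intro i
    have hcond : ∀ m, MeasurableSet {x : X | m ∈ Sset f δ k i x} := by
      intro m
      by_cases hkm : k ≤ m
      · have : {x : X | m ∈ Sset f δ k i x} =
            {x : X | anc f δ k m (near f δ m x) = f k i} ∩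
            ⋂ j ∈ Set.Iio k, ⋃ i', ({x : X | labIdx f δ j x = i'} ∩
              {x : X | anc f δ j m (near f δ m x) = f j i'}) := by
          ext x
          simp only [Sset, mem_inter_iff, mem_iInter, mem_iUnion, mem_setOf_eq, Set.mem_Iio]
          constructor
          · rintro ⟨-, h2, h3⟩
            exact ⟨h2, fun j hj => ⟨labIdx f δ j x, rfl, h3 j hj⟩⟩
          · rintro ⟨h2, h3⟩
            refine ⟨hkm, h2, fun j hj => ?_⟩
            obtain ⟨i', hi1, hi2⟩ := h3 j hj
            rw [hi1]
            exact hi2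
        rw [this]
        exact (measurable_anc_fiber hcov k m _).inter
          (MeasurableSet.biInter (Set.to_countable _) fun j hj =>
            MeasurableSet.iUnion fun i' => (ih j hj i').inter (measurable_anc_fiber hcov j m _))
      · have : {x : X | m ∈ Sset f δ k i x} = ∅ := by
          ext x
          simp only [Sset, mem_setOf_eq, mem_empty_iff_false, iff_false]
          intro h
          exact hkm h.1
        rw [this]
        exact MeasurableSet.empty
    have : {x : X | (Sset f δ k i x).Infinite} =
        ⋂ M : ℕ, ⋃ m : ℕ, ⋃ (_ : M ≤ m), {x : X | m ∈ Sset f δ k i x} := by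
      ext x
      simp only [mem_iInter, mem_iUnion, mem_setOf_eq]
      rw [infinite_nat_iff]
      constructor
      · intro h M
        obtain ⟨m, hm, hMm⟩ := h M
        exact ⟨m, hMm, hm⟩
      · intro h M
        obtain ⟨m, hMm, hm⟩ := h M
        exact ⟨m, hm, hMm⟩
    rw [this]
    exact MeasurableSet.iInter fun M => MeasurableSet.iUnion fun m =>
      MeasurableSet.iUnion fun _ => hcond m
  intro i
  have hchar : {x : X | labIdx f δ k x = i} =
      {x : X | (Sset f δ k i x).Infinite} ∩
      ⋂ i' ∈ Set.Iio i, {x : X | (Sset f δ k i' x).Infinite}ᶜ := by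
    ext x
    simp only [mem_inter_iff, mem_iInter, mem_compl_iff, mem_setOf_eq, Set.mem_Iio]
    have hne : {i'' | (Sset f δ k i'' x).Infinite}.Nonempty :=
      ⟨labIdx f δ k x, Sset_infinite hδ hratio hcov hfin k x⟩
    constructor
    · intro h
      constructor
      · rw [← h]
        exact Sset_infinite hδ hratio hcov hfin k x
      · intro i' hi' hcon
        have := Nat.sInf_le (show i' ∈ {i'' | (Sset f δ k i'' x).Infinite} from hcon)
        rw [← labIdx_def] at this
        omega
    · rintro ⟨h1, h2⟩
      rw [labIdx_def]
      refine le_antisymm (Nat.sInf_le h1) ?_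
      by_contra hcon
      push_neg at hcon
      exact h2 _ hcon (Nat.sInf_mem hne)
  rw [hchar]
  exact (hSm i).inter (MeasurableSet.biInter (Set.to_countable _) fun i' _ => (hSm i').compl)

end RegAux


/-- existence of `(α_{N+n})`-regular sets in doubling uniformly perfect
spaces whenever `α n → 0`. -/
theorem exists_regular_set {X : Type*} [MetricSpace X] [MeasurableSpace X] [BorelSpace X]
    (hX : DoublingSpace X) (hup : UniformlyPerfect X)
    (α : ℕ → ℝ) (hα : ∀ n, 0 < α n ∧ α n < 1)
    (hlim : Tendsto α atTop (nhds 0)) :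
    ∃ (N : ℕ) (E : Set X), IsRegularSet (fun n => α (N + n)) E := by
  classical
  obtain ⟨⟨x₀, y₀, hxy⟩, D, hD, hUP⟩ := hup
  set ε : ℝ := 1 / (32 * (D + 1)) with hεdef
  have hεpos : 0 < ε := by
    have : (0:ℝ) < 32 * (D + 1) := by nlinarith
    positivity
  obtain ⟨N, hN⟩ : ∃ N, ∀ n ≥ N, α n < ε := by
    have h := hlim.eventually (gt_mem_nhds hεpos)
    rw [eventually_atTop] at h
    exact h
  set δ : ℕ → ℝ := fun k => Nat.rec (dist x₀ y₀) (fun k d => α (N + k) * d) k with hδdef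
  have hδ0 : δ 0 = dist x₀ y₀ := rfl
  have hδs : ∀ k, δ (k+1) = α (N + k) * δ k := fun k => rfl
  have hδpos : ∀ k, 0 < δ k := by
    intro k
    induction k with
    | zero => exact dist_pos.2 hxy
    | succ k ih => rw [hδs]; exact mul_pos (hα _).1 ih
  have hαN : ∀ k, α (N + k) < ε := fun k => hN _ (Nat.le_add_right N k)
  have hε32 : ε ≤ 1 / 32 := by
    rw [hεdef]
    rw [div_le_div_iff₀ (by nlinarith) (by norm_num)]
    nlinarith
  have hratio : ∀ k, 16 * δ (k+1) ≤ δ k := by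
    intro k
    rw [hδs]
    have h1 : α (N+k) ≤ 1/32 := le_of_lt (lt_of_lt_of_le (hαN k) hε32)
    nlinarith [hδpos k, (hα (N+k)).1]
  have hmono : ∀ k, δ (k+1) ≤ δ k := by
    intro k
    have := hratio k
    have := hδpos (k+1)
    linarith
  obtain ⟨f, hsep, hcov, hnest, hfin⟩ := RegAux.exists_net_fun hX x₀ δ hδpos hmono
  have hborel : ∀ k i, MeasurableSet {x : X | RegAux.labIdx f δ k x = i} :=
    RegAux.measurable_lab_fiber hδpos hratio hcov hfin
  have S : RegularStructure X (fun n => α (N + n)) := by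
    refine ⟨RegAux.idxset f, fun k i => {x | RegAux.labIdx f δ k x = i}, f,
      fun k _ => δ k / 4, 1, 12, 1, fun _ => 1,
      one_pos, le_refl 1, by norm_num, le_refl 1,
      ?_, ?_, ?_, ?_, ?_, ?_, ?_, ?_, ?_, ?_, ?_, ?_⟩
    -- borel
    · exact fun n i _ => hborel n i
    -- rad_pos
    · intro n i _
      have := hδpos n
      show 0 < δ n / 4
      linarith
    -- cover
    · intro n x
      exact ⟨RegAux.labIdx f δ n x, RegAux.lab_mem_idxset hδpos hratio hcov hfin n x, rfl⟩
    -- pairwise_disj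
    · intro n i _ j _ hij
      rw [Set.eq_empty_iff_forall_notMem]
      rintro x ⟨h1, h2⟩
      have h1' : RegAux.labIdx f δ n x = i := h1
      have h2' : RegAux.labIdx f δ n x = j := h2
      exact hij (h1'.symm.trans h2')
    -- nested
    · intro k m hmk i _ j _
      by_cases hne : ({x : X | RegAux.labIdx f δ k x = i} ∩
          {x : X | RegAux.labIdx f δ m x = j}).Nonempty
      · right
        obtain ⟨z, hz12⟩ := hne
        have hz1 : RegAux.labIdx f δ k z = i := hz12.1
        have hz2 : RegAux.labIdx f δ m z = j := hz12.2
        intro y hy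
        have hy' : RegAux.labIdx f δ k y = i := hy
        show RegAux.labIdx f δ m y = j
        have hzy : RegAux.labIdx f δ k y = RegAux.labIdx f δ k z := by rw [hy', hz1]
        have hc := RegAux.lab_congr hδpos hratio hcov hfin hmk hzy
        rw [hc, hz2]
      · left
        exact Set.not_nonempty_iff_eq_empty.1 hne
    -- ball_subset
    · intro n i hi y hy
      exact RegAux.lab_capture hδpos hratio hsep hcov hfin hi (mem_ball.1 hy)
    -- subset_ball
    · intro n i _ x hx
      show x ∈ ball (f n i) (12 * (δ n / 4))
      rw [mem_ball]
      have h := RegAux.lab_outer hδpos hratio hcov hfin n x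
      rw [(hx : RegAux.labIdx f δ n x = i)] at h
      have := hδpos n
      linarith
    -- center_lower
    · intro n i _ j _ _
      show (1:ℝ) / 1 * α (N + n) ^ ((1:ℝ) / 1) * (δ n / 4) ≤ δ (n+1) / 4
      apply le_of_eq
      have h := hδs n
      rw [h]
      norm_num
      ring
    -- center_upper
    · intro n i _ j _ _
      show δ (n+1) / 4 ≤ 1 * α (N + n) ^ (1:ℝ) * (δ n / 4)
      apply le_of_eq
      have h := hδs n
      rw [h]
      norm_num
      ring
    -- center_proper
    · intro n i hi j _ hctr
      have hr : 0 < δ n / 4 := by linarith [hδpos n]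
      have hδn0 : δ n ≤ δ 0 := RegAux.delta_mono hδpos hratio (Nat.zero_le n)
      have hne : ((Set.univ : Set X) \ ball (f n i) (δ n / 4)).Nonempty := by
        rcases le_or_gt (δ n / 4) (dist x₀ (f n i)) with h | h
        · refine ⟨x₀, Set.mem_univ _, fun hmem => ?_⟩
          rw [mem_ball] at hmem
          linarith
        · refine ⟨y₀, Set.mem_univ _, fun hmem => ?_⟩
          rw [mem_ball] at hmem
          have htri : δ 0 ≤ dist x₀ (f n i) + dist (f n i) y₀ := by
            rw [hδ0]; exact dist_triangle _ _ _
          rw [dist_comm (f n i) y₀] at htri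
          have hδnpos := hδpos n
          linarith
      obtain ⟨y, hy1, hy2⟩ := hUP (f n i) (δ n / 4) hr hne
      refine ⟨y, ?_, ?_⟩
      · exact RegAux.lab_capture hδpos hratio hsep hcov hfin hi (mem_ball.1 hy1)
      · intro hyQ
        have h1 := RegAux.lab_outer hδpos hratio hcov hfin (n+1) y
        rw [(hyQ : RegAux.labIdx f δ (n+1) y = j)] at h1
        have h2 := RegAux.lab_outer hδpos hratio hcov hfin (n+1) (f n i)
        rw [(hctr : RegAux.labIdx f δ (n+1) (f n i) = j)] at h2
        have h3 := dist_triangle_right y (f n i) (f (n+1) j)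
        have h4 : δ n / 4 / D ≤ dist y (f n i) := by
          by_contra hcon
          push_neg at hcon
          exact hy2 (mem_ball.2 hcon)
        have h5 : 4 * δ (n+1) < δ n / 4 / D := by
          rw [hδs n]
          have hα' : α (N + n) < ε := hαN n
          have hα0 : 0 < α (N + n) := (hα _).1
          have hδn := hδpos n
          have hD0 : (0:ℝ) < D := by linarith
          rw [div_div, lt_div_iff₀ (by nlinarith : (0:ℝ) < 4 * D)]
          have hεD : ε * (4 * D) ≤ 1 / 8 := by
            rw [hεdef]
            rw [div_mul_eq_mul_div, div_le_div_iff₀ (by nlinarith) (by norm_num)]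
            nlinarith
          have hstep : α (N + n) * (4 * D) < 1 / 8 :=
            lt_of_lt_of_le (mul_lt_mul_of_pos_right hα' (by nlinarith)) hεD
          nlinarith [mul_lt_mul_of_pos_right hstep (by linarith : (0:ℝ) < 4 * δ n)]
        linarith
    -- one_le_C₃
    · exact fun T _ => le_refl 1
    -- comparable
    · intro T _ n i _ j _ _
      constructor
      · show (1:ℝ) / 1 * (δ n / 4) ≤ δ n / 4
        norm_num
      · show δ n / 4 ≤ 1 * (δ n / 4)
        norm_num
  exact ⟨N, S.limitSet, S, rfl⟩
end
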